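/- arXiv:1505.00163 — 2 statements merged into one kernel-verified Lean document; each statement's English description precedes it below -/
import Mathlib

section
/- Let V be a ℚ-vector space with an SL₂(ℤ)-action with (u-1)³ = 0, w² acting as 1, and x = log u. Setting y = -wxw and h = [x,y] = xy - yx, one has h = x²w - wx² and [h,x] = 2x and [h,y] = -2y in End(V), i.e., (x, h, y) is an sl₂-triple. -/
open Matrix

def u : Matrix.SpecialLinearGroup (Fin 2) ℤ :=
  ⟨!![1, 1; 0, 1], by simp [Matrix.det_fin_two_of]⟩

def w : Matrix.SpecialLinearGroup (Fin 2) ℤ :=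
  ⟨!![0, 1; -1, 0], by simp [Matrix.det_fin_two_of]⟩

/-!
Write `W = ρ w` and `P = 1 + W`, so that `P * P = 2 • P`. Since `x ^ 3 = 0`, the operators `ρ u`
and `ρ u⁻¹` are the truncated exponentials `1 ± x + x ^ 2 / 2`, and the relation `u w u = w u⁻¹ w`
of `SL₂(ℤ)` together with its inverse becomes a polynomial identity in `x` and `W`. Its part odd
in `x` reads `2 • (P x P - x) + Q = 0` with `Q = x²Wx + xWx²`. Multiplying by `x²` on the left and
on the right shows `P Q P = 0`, and sandwiching between two copies of `P` then gives
`6 • P x P = 0`. So `P x P = 0` and `Q = 2 • x`; the first identity computes `h = ⁅x², W⁆`, the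
second gives `⁅h, x⁆ = 2 • x`, and conjugating by `W` (which sends `h` to `-h` and `x` to `-y`)
gives `⁅h, y⁆ = -2 • y`.
-/

theorem u_mul_w_mul_u : u * w * u = w * u⁻¹ * w := by
  apply Subtype.ext
  simp only [Matrix.SpecialLinearGroup.coe_mul, Matrix.SpecialLinearGroup.coe_inv]
  simp [u, w]

section TruncatedExp

variable {A : Type*} [Ring A] [Algebra ℚ A]

/-- The exponential series truncated after degree two; it equals `IsNilpotent.exp x` when
`x ^ 3 = 0`. -/
def cubicExp (x : A) : A := 1 + x + (2⁻¹ : ℚ) • x ^ 2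

/-- `log (1 + N)` truncated after degree two. -/
def cubicLog (N : A) : A := N - (2⁻¹ : ℚ) • N ^ 2

theorem cubicLog_pow_three {N : A} (hN : N ^ 3 = 0) : cubicLog N ^ 3 = 0 := by
  have hcomm : Commute N (1 - (2⁻¹ : ℚ) • N) :=
    (Commute.one_right N).sub_right ((Commute.refl N).smul_right _)
  have hfactor : cubicLog N = N * (1 - (2⁻¹ : ℚ) • N) := by
    rw [cubicLog, mul_sub, mul_one, mul_smul_comm, sq]
  rw [hfactor, hcomm.mul_pow, hN, zero_mul]

theorem cubicExp_cubicLog {N : A} (hN : N ^ 3 = 0) : cubicExp (cubicLog N) = 1 + N :=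
  calc cubicExp (cubicLog N) = 1 + N + N ^ 3 * ((8⁻¹ : ℚ) • N - (2⁻¹ : ℚ) • 1) := by
        rw [cubicExp, cubicLog]; noncomm_ring; module
    _ = 1 + N := by rw [hN, zero_mul, add_zero]

theorem cubicExp_mul_cubicExp_neg {x : A} (hx : x ^ 3 = 0) : cubicExp x * cubicExp (-x) = 1 :=
  calc cubicExp x * cubicExp (-x) = 1 + x ^ 3 * ((4⁻¹ : ℚ) • x) := by
        rw [cubicExp, cubicExp]; noncomm_ring; module
    _ = 1 := by rw [hx, zero_mul, add_zero]

variable {x W : A}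

theorem braid_odd_part_eq_zero (hx : x ^ 3 = 0) (hW : W * W = 1)
    (hbraid : cubicExp x * W * cubicExp x = W * cubicExp (-x) * W) :
    2 • (W * x + x * W + W * x * W) + (x ^ 2 * W * x + x * W * x ^ 2) = 0 := by
  have hneg : cubicExp (-x) * cubicExp x = 1 := by
    have hx' : (-x) ^ 3 = 0 := by rw [Odd.neg_pow (by decide), hx, neg_zero]
    simpa using cubicExp_mul_cubicExp_neg hx'
  have hbraid_inv : cubicExp (-x) * W * cubicExp (-x) = W * cubicExp x * W :=
    calc cubicExp (-x) * W * cubicExp (-x)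
        = cubicExp (-x) * (W * cubicExp (-x) * W) * W := by simp only [mul_assoc, hW, mul_one]
      _ = cubicExp (-x) * (cubicExp x * W * cubicExp x) * W := by rw [hbraid]
      _ = (cubicExp (-x) * cubicExp x) * (W * cubicExp x * W) := by simp only [mul_assoc]
      _ = W * cubicExp x * W := by rw [hneg, one_mul]
  calc 2 • (W * x + x * W + W * x * W) + (x ^ 2 * W * x + x * W * x ^ 2)
      = (cubicExp x * W * cubicExp x - W * cubicExp (-x) * W)
          - (cubicExp (-x) * W * cubicExp (-x) - W * cubicExp x * W) := by
        simp only [cubicExp]; noncomm_ring; module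
    _ = 0 := by rw [hbraid, hbraid_inv, sub_self, sub_self, sub_zero]

theorem one_add_mul_mul_one_add_eq_zero (hx : x ^ 3 = 0) (hW : W * W = 1)
    (hodd : 2 • (W * x + x * W + W * x * W) + (x ^ 2 * W * x + x * W * x ^ 2) = 0) :
    (1 + W) * x * (1 + W) = 0 := by
  set P := 1 + W with hP
  set Q := x ^ 2 * W * x + x * W * x ^ 2 with hQ
  have hPP : P * P = 2 • P :=
    calc P * P = 2 • P + (W * W - 1) := by rw [hP]; noncomm_ring
      _ = 2 • P := by rw [hW, sub_self, add_zero]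
  have hodd' : 2 • (P * x * P - x) + Q = 0 := by rw [← hodd, hP]; noncomm_ring
  have hleft : 2 • (x ^ 2 * W * x * P) = 0 :=
    calc 2 • (x ^ 2 * W * x * P)
        = x ^ 2 * (2 • (P * x * P - x) + Q) - x ^ 3 * (2 • W + x * W * x + W * x ^ 2) := by
          rw [hP, hQ]; noncomm_ring
      _ = 0 := by rw [hodd', hx, mul_zero, zero_mul, sub_zero]
  have hright : 2 • (P * x * W * x ^ 2) = 0 :=
    calc 2 • (P * x * W * x ^ 2)
        = (2 • (P * x * P - x) + Q) * x ^ 2 - (2 • W + x ^ 2 * W + x * W * x) * x ^ 3 := by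
          rw [hP, hQ]; noncomm_ring
      _ = 0 := by rw [hodd', hx, mul_zero, zero_mul, sub_zero]
  have hPQP : 2 • (P * Q * P) = 0 :=
    calc 2 • (P * Q * P) = P * (2 • (x ^ 2 * W * x * P)) + 2 • (P * x * W * x ^ 2) * P := by
          rw [hQ]; noncomm_ring
      _ = 0 := by rw [hleft, hright, mul_zero, zero_mul, add_zero]
  have h6 : 6 • (P * x * P) + P * Q * P = 0 :=
    calc 6 • (P * x * P) + P * Q * P = P * (2 • (P * x * P - x) + Q) * P := by
          rw [show P * (2 • (P * x * P - x) + Q) * P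
              = 2 • ((P * P) * x * (P * P)) - 2 • (P * x * P) + P * Q * P by noncomm_ring, hPP]
          simp only [smul_mul_assoc, mul_smul_comm, mul_assoc]
          module
      _ = 0 := by rw [hodd', mul_zero, zero_mul]
  have h12 : (12 : ℚ) • (P * x * P) = 0 :=
    calc (12 : ℚ) • (P * x * P)
        = 2 • (6 • (P * x * P) + P * Q * P) - 2 • (P * Q * P) := by module
      _ = 0 := by rw [h6, hPQP, smul_zero, sub_zero]
  exact (smul_eq_zero.mp h12).resolve_left (by norm_num)

theorem sl2_relations_of_braid (hx : x ^ 3 = 0) (hW : W * W = 1)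
    (hbraid : cubicExp x * W * cubicExp x = W * cubicExp (-x) * W) :
    (1 + W) * x * (1 + W) = 0 ∧ x ^ 2 * W * x + x * W * x ^ 2 = 2 • x := by
  have hodd := braid_odd_part_eq_zero hx hW hbraid
  have hP := one_add_mul_mul_one_add_eq_zero hx hW hodd
  refine ⟨hP, ?_⟩
  calc x ^ 2 * W * x + x * W * x ^ 2
      = 2 • x + (2 • (W * x + x * W + W * x * W) + (x ^ 2 * W * x + x * W * x ^ 2))
          - 2 • ((1 + W) * x * (1 + W)) := by noncomm_ring
    _ = 2 • x := by rw [hodd, hP, smul_zero, add_zero, sub_zero]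

end TruncatedExp

section Commutators

variable {A : Type*} [Ring A] {x W : A}

theorem lie_neg_conj_eq_lie_sq (hP : (1 + W) * x * (1 + W) = 0) :
    ⁅x, -(W * x * W)⁆ = ⁅x ^ 2, W⁆ :=
  calc ⁅x, -(W * x * W)⁆
      = ⁅x ^ 2, W⁆ + (1 + W) * x * (1 + W) * x - x * ((1 + W) * x * (1 + W)) := by
        simp only [Ring.lie_def]; noncomm_ring
    _ = ⁅x ^ 2, W⁆ := by rw [hP, zero_mul, mul_zero, add_zero, sub_zero]

theorem lie_lie_sq_left (hx : x ^ 3 = 0) (hQ : x ^ 2 * W * x + x * W * x ^ 2 = 2 • x) :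
    ⁅⁅x ^ 2, W⁆, x⁆ = 2 • x :=
  calc ⁅⁅x ^ 2, W⁆, x⁆ = (x ^ 2 * W * x + x * W * x ^ 2) - (W * x ^ 3 + x ^ 3 * W) := by
        simp only [Ring.lie_def]; noncomm_ring
    _ = 2 • x := by rw [hQ, hx, mul_zero, zero_mul, add_zero, sub_zero]

theorem lie_lie_sq_neg_conj (hx : x ^ 3 = 0) (hW : W * W = 1)
    (hQ : x ^ 2 * W * x + x * W * x ^ 2 = 2 • x) :
    ⁅⁅x ^ 2, W⁆, -(W * x * W)⁆ = -(2 • -(W * x * W)) :=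
  calc ⁅⁅x ^ 2, W⁆, -(W * x * W)⁆
      = W * (x ^ 2 * W * x + x * W * x ^ 2) * W - (x ^ 3 * W + W * x ^ 3)
          - (x ^ 2 * (W * W - 1) * x * W + W * x * (W * W - 1) * x ^ 2) := by
        simp only [Ring.lie_def]; noncomm_ring
    _ = -(2 • -(W * x * W)) := by
        rw [hQ, hx, hW, sub_self]
        simp only [mul_zero, zero_mul, add_zero, sub_zero, mul_smul_comm, smul_mul_assoc,
          smul_neg, neg_neg]

end Commutators

/-- In a cubic module with `w²` acting trivially, with `x = log u`, `y = -wxw`,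
`h = [x,y]`, one has `h = x²w - wx²`, `[h,x] = 2x` and `[h,y] = -2y`:
`(x, h, y)` is an `sl₂`-triple. -/
theorem cubic_plus_sl2_triple
    (V : Type*) [AddCommGroup V] [Module ℚ V]
    (ρ : Representation ℚ (Matrix.SpecialLinearGroup (Fin 2) ℤ) V)
    (hcub : (ρ u - 1) ^ 3 = 0)
    (hi : ρ (w ^ 2) = 1)
    (x y h : Module.End ℚ V)
    (hx : x = (ρ u - 1) - (2⁻¹ : ℚ) • (ρ u - 1) ^ 2)
    (hy : y = -(ρ w * x * ρ w))
    (hh : h = x * y - y * x) :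
    h = x ^ 2 * ρ w - ρ w * x ^ 2 ∧
      h * x - x * h = 2 • x ∧
      h * y - y * h = -(2 • y) := by
  have hW : ρ w * ρ w = 1 := by rw [← map_mul, ← sq, hi]
  have hx3 : x ^ 3 = 0 := hx ▸ cubicLog_pow_three hcub
  have hu : ρ u = cubicExp x := by
    rw [hx, ← cubicLog, cubicExp_cubicLog hcub, add_sub_cancel]
  have hu_inv : ρ u⁻¹ = cubicExp (-x) :=
    left_inv_eq_right_inv (by rw [← map_mul, inv_mul_cancel, map_one])
      (hu ▸ cubicExp_mul_cubicExp_neg hx3)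
  have hbraid : cubicExp x * ρ w * cubicExp x = ρ w * cubicExp (-x) * ρ w := by
    simpa only [map_mul, hu, hu_inv] using congrArg ρ u_mul_w_mul_u
  obtain ⟨hP, hQ⟩ := sl2_relations_of_braid hx3 hW hbraid
  have hh' : h = ⁅x ^ 2, ρ w⁆ := by
    rw [hh, hy, ← Ring.lie_def, lie_neg_conj_eq_lie_sq hP]
  refine ⟨by rw [hh', Ring.lie_def], ?_, ?_⟩
  · rw [← Ring.lie_def, hh', lie_lie_sq_left hx3 hQ]
  · rw [← Ring.lie_def, hh', hy, lie_lie_sq_neg_conj hx3 hW hQ]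
end

section
/- Let V be a ℚ-vector space with an SL₂(ℤ)-action such that (u-1)⁵ = 0 and w² acts as -1, and let x = log u. Then x⁴wx⁴wx⁴ = 0 in End(V). -/
open Matrix

/-!
Write `N = ρ u - 1` and `P = N ^ 4`. Since `x = N (1 + N y)` with `y` a polynomial in `N`, and
`N ^ 5 = 0`, we get `x ^ 4 = P`. The element `P` absorbs `ρ u^{±1}` on both sides, so `P ρ(g) P`
only depends on the double coset `⟨u⟩ g ⟨u⟩`. Conjugating by `w` turns `P` into `(ρ l - 1) ^ 4`,
`l = w u w⁻¹`, and `(ρ l - 1) ^ 5 = 0` lets us write it as the balanced Laurent polynomial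
`l² + l⁻² - 4 (l + l⁻¹) + 6`. Finally `l` and `l²` lie in the double cosets of `-l⁻¹` and `-l⁻²`
(because `1 ≡ -1` modulo `1` and `2`), and `w² = -1`, so `P ρ(l^k) P = -P ρ(l^{-k}) P` for
`k = 1, 2`; together with `P * P = 0` every term cancels.
-/

section Log

variable {A : Type*} [Ring A]

theorem pow_mul_one_add_mul_pow {N : A} {n : ℕ} (hN : N ^ (n + 1) = 0) (y : A) (k : ℕ) :
    N ^ n * (1 + N * y) ^ k = N ^ n := by
  induction k with
  | zero => rw [pow_zero, mul_one]
  | succ k ih => rw [pow_succ, ← mul_assoc, ih, mul_add, mul_one, ← mul_assoc, ← pow_succ, hN,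
      zero_mul, add_zero]

theorem mul_one_add_mul_pow {N y : A} (hNy : Commute N y) {n : ℕ} (hN : N ^ (n + 1) = 0) :
    (N * (1 + N * y)) ^ n = N ^ n := by
  rw [((Commute.one_right N).add_right ((Commute.refl N).mul_right hNy)).mul_pow,
    pow_mul_one_add_mul_pow hN]

theorem log_series_pow_four [Algebra ℚ A] {N : A} (hN : N ^ 5 = 0) :
    (∑ k ∈ Finset.Icc (1 : ℕ) 4, ((-1 : ℚ) ^ (k + 1) * (k : ℚ)⁻¹) • N ^ k) ^ 4 = N ^ 4 := by
  set y : A := (-2⁻¹ : ℚ) • 1 + (3⁻¹ : ℚ) • N - (4⁻¹ : ℚ) • N ^ 2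
  have hNy : Commute N y :=
    (((Commute.one_right N).smul_right (-2⁻¹ : ℚ)).add_right
      ((Commute.refl N).smul_right (3⁻¹ : ℚ))).sub_right
      (((Commute.refl N).pow_right 2).smul_right (4⁻¹ : ℚ))
  have hlog : ∑ k ∈ Finset.Icc (1 : ℕ) 4, ((-1 : ℚ) ^ (k + 1) * (k : ℚ)⁻¹) • N ^ k
      = N * (1 + N * y) := by
    rw [show Finset.Icc (1 : ℕ) 4 = {1, 2, 3, 4} by decide, Finset.sum_insert (by decide),
      Finset.sum_insert (by decide), Finset.sum_insert (by decide), Finset.sum_singleton]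
    norm_num [y]
    noncomm_ring
  rw [hlog, mul_one_add_mul_pow hNy hN]

end Log

namespace MonoidHom

variable {G A : Type*} [Group G] [Ring A] (f : G →* A)

def absorbingSubgroup (P : A) : Subgroup G where
  carrier := {g | P * f g = P ∧ f g * P = P}
  one_mem' := by simp
  mul_mem' := by
    rintro a b ⟨haR, haL⟩ ⟨hbR, hbL⟩
    exact ⟨by rw [map_mul, ← mul_assoc, haR, hbR], by rw [map_mul, mul_assoc, hbL, haL]⟩
  inv_mem' := by
    rintro a ⟨haR, haL⟩
    refine ⟨?_, ?_⟩
    · calc P * f a⁻¹ = P * f a * f a⁻¹ := by rw [haR]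
        _ = P := by rw [mul_assoc, ← map_mul, mul_inv_cancel, map_one, mul_one]
    · calc f a⁻¹ * P = f a⁻¹ * (f a * P) := by rw [haL]
        _ = P := by rw [← mul_assoc, ← map_mul, inv_mul_cancel, map_one, one_mul]

theorem mem_absorbingSubgroup_sub_one_pow {g : G} {n : ℕ} (h : (f g - 1) ^ (n + 1) = 0) :
    g ∈ f.absorbingSubgroup ((f g - 1) ^ n) := by
  constructor
  · calc (f g - 1) ^ n * f g = (f g - 1) ^ (n + 1) + (f g - 1) ^ n := by
          rw [pow_succ]; noncomm_ring
      _ = (f g - 1) ^ n := by rw [h, zero_add]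
  · calc f g * (f g - 1) ^ n = (f g - 1) ^ (n + 1) + (f g - 1) ^ n := by
          rw [pow_succ']; noncomm_ring
      _ = (f g - 1) ^ n := by rw [h, zero_add]

theorem mul_map_mul_mul_eq {P : A} {a b : G} (ha : a ∈ f.absorbingSubgroup P)
    (hb : b ∈ f.absorbingSubgroup P) (g : G) : P * f (a * g * b) * P = P * f g * P := by
  rw [map_mul, map_mul, ← mul_assoc, ← mul_assoc, ha.1, mul_assoc _ (f b), hb.2]

theorem mul_map_mul_mul_mul_eq_neg {P : A} {z a b : G} (hz : f z = -1)
    (ha : a ∈ f.absorbingSubgroup P) (hb : b ∈ f.absorbingSubgroup P) (g : G) :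
    P * f (z * (a * g * b)) * P = -(P * f g * P) := by
  rw [map_mul, hz, neg_one_mul, mul_neg, neg_mul, f.mul_map_mul_mul_eq ha hb]

theorem map_conj_sub_one_pow (g h : G) (n : ℕ) :
    (f (g * h * g⁻¹) - 1) ^ n = f g * (f h - 1) ^ n * f g⁻¹ := by
  have hconj : SemiconjBy (f g) (f h - 1) (f (g * h * g⁻¹) - 1) := by
    simp only [SemiconjBy, mul_sub, sub_mul, mul_one, one_mul, ← map_mul, inv_mul_cancel_right]
  rw [(hconj.pow_right n).eq, mul_assoc (_ ^ n), ← map_mul, mul_inv_cancel, map_one, mul_one]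

theorem sub_one_pow_four_mul_map_inv_mul_map_inv (g : G) :
    (f g - 1) ^ 4 * f g⁻¹ * f g⁻¹ = f (g * g) + f (g⁻¹ * g⁻¹) - 4 * (f g + f g⁻¹) + 6 := by
  rw [map_mul, map_mul]
  set L := f g
  set L' := f g⁻¹
  have hLL' : L * L' = 1 := by rw [← map_mul, mul_inv_cancel, map_one]
  have cancel (a : A) : L * (L' * a) = a := by rw [← mul_assoc, hLL', one_mul]
  calc (L - 1) ^ 4 * L' * L'
      = L * (L * (L * (L * (L' * L')))) - 4 * (L * (L * (L * (L' * L'))))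
        + 6 * (L * (L * (L' * L'))) - 4 * (L * (L' * L')) + L' * L' := by noncomm_ring
    _ = L * L + L' * L' - 4 * (L + L') + 6 := by simp only [cancel, hLL', mul_one]; noncomm_ring

end MonoidHom

def l : Matrix.SpecialLinearGroup (Fin 2) ℤ :=
  ⟨!![1, 0; -1, 1], by simp [Matrix.det_fin_two_of]⟩

theorem w_mul_u_mul_w_inv : w * u * w⁻¹ = l :=
  Subtype.ext <| by
    simp only [Matrix.SpecialLinearGroup.coe_mul, Matrix.SpecialLinearGroup.coe_inv]
    simp [u, w, l, Matrix.adjugate_fin_two_of]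

theorem l_eq : l = w ^ 2 * (u⁻¹ * u⁻¹ * l⁻¹ * (u⁻¹ * u⁻¹)) :=
  Subtype.ext <| by
    simp only [Matrix.SpecialLinearGroup.coe_mul, Matrix.SpecialLinearGroup.coe_inv,
      Matrix.SpecialLinearGroup.coe_pow]
    simp [u, w, l, Matrix.adjugate_fin_two_of, pow_two]

theorem l_mul_l_eq : l * l = w ^ 2 * (u⁻¹ * (l⁻¹ * l⁻¹) * u⁻¹) :=
  Subtype.ext <| by
    simp only [Matrix.SpecialLinearGroup.coe_mul, Matrix.SpecialLinearGroup.coe_inv,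
      Matrix.SpecialLinearGroup.coe_pow]
    simp [u, w, l, Matrix.adjugate_fin_two_of, pow_two]

section SL2

variable {A : Type*} [Ring A] {f : Matrix.SpecialLinearGroup (Fin 2) ℤ →* A}

theorem map_w_mul_sub_one_pow_four_mul_map_w (hu : (f u - 1) ^ 5 = 0) (hw : f (w ^ 2) = -1) :
    f w * (f u - 1) ^ 4 * f w = -(f (l * l) + f (l⁻¹ * l⁻¹) - 4 * (f l + f l⁻¹) + 6) := by
  have hl : (f l - 1) ^ 5 = 0 := by
    rw [← w_mul_u_mul_w_inv, f.map_conj_sub_one_pow, hu, mul_zero, zero_mul]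
  have hl' := inv_mem (f.mem_absorbingSubgroup_sub_one_pow hl)
  calc f w * (f u - 1) ^ 4 * f w = f w * (f u - 1) ^ 4 * f w⁻¹ * f (w ^ 2) := by
        rw [mul_assoc _ (f w⁻¹), ← map_mul, pow_two, inv_mul_cancel_left]
    _ = -((f l - 1) ^ 4 * f l⁻¹ * f l⁻¹) := by
        rw [hw, mul_neg_one, ← f.map_conj_sub_one_pow, w_mul_u_mul_w_inv, hl'.1, hl'.1]
    _ = _ := by rw [f.sub_one_pow_four_mul_map_inv_mul_map_inv]

theorem sub_one_pow_four_mul_laurent_mul_sub_one_pow_four (hu : (f u - 1) ^ 5 = 0)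
    (hw : f (w ^ 2) = -1) :
    (f u - 1) ^ 4 * (f (l * l) + f (l⁻¹ * l⁻¹) - 4 * (f l + f l⁻¹) + 6) * (f u - 1) ^ 4 = 0 := by
  set P := (f u - 1) ^ 4
  have hP : u⁻¹ ∈ f.absorbingSubgroup P := inv_mem (f.mem_absorbingSubgroup_sub_one_pow hu)
  have hodd : P * f l * P = -(P * f l⁻¹ * P) := by
    conv_lhs => rw [l_eq]
    exact f.mul_map_mul_mul_mul_eq_neg hw (mul_mem hP hP) (mul_mem hP hP) _
  have heven : P * f (l * l) * P = -(P * f (l⁻¹ * l⁻¹) * P) := by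
    rw [l_mul_l_eq]
    exact f.mul_map_mul_mul_mul_eq_neg hw hP hP _
  have hPP : P * P = 0 := by
    rw [← pow_add]; exact pow_eq_zero_of_le (by norm_num) hu
  calc P * (f (l * l) + f (l⁻¹ * l⁻¹) - 4 * (f l + f l⁻¹) + 6) * P
      = P * f (l * l) * P + P * f (l⁻¹ * l⁻¹) * P - 4 * (P * f l * P + P * f l⁻¹ * P)
          + 6 * (P * P) := by noncomm_ring
    _ = 0 := by rw [hodd, heven, hPP]; noncomm_ring

end SL2

/-- If `(u-1)⁵ = 0` and `w²` acts as `-1`, then with `x = log u` one has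
`x⁴wx⁴wx⁴ = 0` in `End(V)`. -/
theorem quintic_minus_x4wx4wx4
    (V : Type*) [AddCommGroup V] [Module ℚ V]
    (ρ : Representation ℚ (Matrix.SpecialLinearGroup (Fin 2) ℤ) V)
    (hquint : (ρ u - 1) ^ 5 = 0)
    (hi : ρ (w ^ 2) = -1)
    (x : Module.End ℚ V)
    (hx : x = ∑ k ∈ Finset.Icc (1 : ℕ) 4, ((-1 : ℚ) ^ (k + 1) * (k : ℚ)⁻¹) • (ρ u - 1) ^ k) :
    x ^ 4 * ρ w * x ^ 4 * ρ w * x ^ 4 = 0 := by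
  have hx4 : x ^ 4 = (ρ u - 1) ^ 4 := hx ▸ log_series_pow_four hquint
  calc x ^ 4 * ρ w * x ^ 4 * ρ w * x ^ 4
      = (ρ u - 1) ^ 4 * (ρ w * (ρ u - 1) ^ 4 * ρ w) * (ρ u - 1) ^ 4 := by
        rw [hx4]; simp only [mul_assoc]
    _ = -((ρ u - 1) ^ 4 * (ρ (l * l) + ρ (l⁻¹ * l⁻¹) - 4 * (ρ l + ρ l⁻¹) + 6)
          * (ρ u - 1) ^ 4) := by
        rw [map_w_mul_sub_one_pow_four_mul_map_w hquint hi, mul_neg, neg_mul]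
    _ = 0 := by rw [sub_one_pow_four_mul_laurent_mul_sub_one_pow_four hquint hi, neg_zero]
end
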